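/- arXiv:2310.14794 — 2 statements merged into one kernel-verified Lean document; each statement's English description precedes it below -/
import Mathlib

section
/- Each single-index theta matrix Θ_α is similar to the corresponding gamma matrix: Θ_α = S γ_α S⁻¹, where S is the diagonal operator on the exterior algebra with S e_I = z(|I|) e_I, z(k) = 1 for k ∈ {0,1,4} and z(k) = -1 for k ∈ {2,3} (equivalently z(0)=1, z(k+1) = (-1)^k z(k)). -/
open Matrix

/-- Index set for the basis of the exterior algebra of Minkowski space:
subsets of `{t,x,y,z} = Fin 4`. -/
abbrev Idx := Finset (Fin 4)

/-- The Minkowski metric `η = diag(1,-1,-1,-1)` (diagonal entries, real). -/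
noncomputable def etaR : Fin 4 → ℝ := ![1, -1, -1, -1]

/-- The Minkowski metric diagonal entries, as complex numbers. -/
noncomputable def etaC : Fin 4 → ℂ := fun α => (etaR α : ℂ)

/-- Exterior multiplication `ψ ↦ e_α ∧ ψ` as a matrix on the exterior algebra,
with basis `e_S` indexed by subsets `S` (in increasing order). -/
noncomputable def wedgeE (α : Fin 4) : Matrix Idx Idx ℂ :=
  Matrix.of fun S T =>
    if α ∈ S ∧ T = S.erase α then (-1 : ℂ) ^ (S.filter (· < α)).card else 0

/-- The interior product `ι_α` (with `ι_α e_β = η_{αβ}`, extended by the graded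
Leibniz rule) as a matrix on the exterior algebra. -/
noncomputable def iotaE (α : Fin 4) : Matrix Idx Idx ℂ :=
  Matrix.of fun S T =>
    if α ∉ S ∧ T = insert α S then etaC α * (-1 : ℂ) ^ (S.filter (· < α)).card else 0

/-- The Clifford action `γ_α ψ = e_α ∧ ψ - ι_α ψ` on the exterior algebra. -/
noncomputable def gam (α : Fin 4) : Matrix Idx Idx ℂ := wedgeE α - iotaE α

/-- The extended metric `η̂` on the exterior algebra: diagonal with
`η̂_{SS} = ∏_{α ∈ S} η_{αα}`. -/
noncomputable def etahat : Matrix Idx Idx ℂ := Matrix.diagonal fun S => ∏ α ∈ S, etaC α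

/-- The diagonal similarity operator `S`, with `S e_I = e_I` if `|I| ∈ {0,1,4}`
and `S e_I = -e_I` if `|I| ∈ {2,3}`. -/
noncomputable def Smat : Matrix Idx Idx ℂ :=
  Matrix.diagonal fun I => if I.card = 2 ∨ I.card = 3 then (-1 : ℂ) else 1

/-! ### Auxiliary integer-valued versions of the matrices -/

def etaZ : Fin 4 → ℤ := ![1, -1, -1, -1]

def wedgeZ (α : Fin 4) : Matrix Idx Idx ℤ :=
  Matrix.of fun S T => if α ∈ S ∧ T = S.erase α then (-1 : ℤ) ^ (S.filter (· < α)).card else 0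

def iotaZ (α : Fin 4) : Matrix Idx Idx ℤ :=
  Matrix.of fun S T =>
    if α ∉ S ∧ T = insert α S then etaZ α * (-1 : ℤ) ^ (S.filter (· < α)).card else 0

def gamZ (α : Fin 4) : Matrix Idx Idx ℤ := wedgeZ α - iotaZ α

def zfun : Idx → ℤ := fun I => if I.card = 2 ∨ I.card = 3 then -1 else 1

def SmatZ : Matrix Idx Idx ℤ := Matrix.diagonal zfun

def ThZ (α : Fin 4) : Matrix Idx Idx ℤ := Matrix.of fun S T => zfun S * gamZ α S T * zfun T

noncomputable def castM (A : Matrix Idx Idx ℤ) : Matrix Idx Idx ℂ := A.map ((↑) : ℤ → ℂ)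

lemma castM_mul (A B : Matrix Idx Idx ℤ) : castM (A * B) = castM A * castM B :=
  Matrix.map_mul (f := Int.castRingHom ℂ)

lemma castM_apply (A : Matrix Idx Idx ℤ) (i j : Idx) : castM A i j = ((A i j : ℤ) : ℂ) := rfl

lemma etaC_cast (α : Fin 4) : etaC α = ((etaZ α : ℤ) : ℂ) := by
  fin_cases α <;> norm_num [etaC, etaR, etaZ]

lemma gam_cast (α : Fin 4) : gam α = castM (gamZ α) := by
  ext S T
  simp only [gam, gamZ, Matrix.sub_apply, castM_apply, Int.cast_sub]
  congr 1
  · simp only [wedgeE, wedgeZ, Matrix.of_apply]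
    split <;> push_cast <;> ring
  · simp only [iotaE, iotaZ, Matrix.of_apply, etaC_cast]
    split <;> push_cast <;> ring

lemma Smat_cast : Smat = castM SmatZ := by
  ext S T
  simp only [Smat, SmatZ, zfun, castM_apply, Matrix.diagonal_apply]
  split <;> [skip; simp] <;> split <;> simp

set_option maxRecDepth 100000 in
set_option maxHeartbeats 1000000 in
lemma SmatZ_mul_self : SmatZ * SmatZ = 1 := by decide

lemma Smat_mul_self : Smat * Smat = 1 := by
  rw [Smat_cast, ← castM_mul, SmatZ_mul_self]
  exact Matrix.map_one _ Int.cast_zero Int.cast_one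

lemma Smat_inv : Smat⁻¹ = Smat := by
  rw [Matrix.inv_eq_left_inv Smat_mul_self]

set_option maxRecDepth 100000 in
set_option maxHeartbeats 1000000 in
lemma ThZ_eq (α : Fin 4) : ThZ α = SmatZ * gamZ α * SmatZ := by
  ext S T
  simp [ThZ, SmatZ, Matrix.diagonal_mul, Matrix.mul_diagonal]

set_option maxRecDepth 1000000 in
set_option maxHeartbeats 10000000 in
lemma commZ : ∀ α ρ : Fin 4, ThZ α * gamZ ρ = gamZ ρ * ThZ α := by decide

set_option maxRecDepth 1000000 in
set_option maxHeartbeats 10000000 in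
lemma colZ : ∀ (S0 : Idx) (m : Fin 4), m ∈ S0 → (∀ b ∈ S0, m ≤ b) →
    ∀ S : Idx, gamZ m S (S0.erase m) = if S = S0 then 1 else 0 := by decide

set_option maxRecDepth 1000000 in
set_option maxHeartbeats 10000000 in
lemma ThZ_col : ∀ (α : Fin 4) (S : Idx), ThZ α S ∅ = if S = {α} then 1 else 0 := by decide

lemma mulVec_single' (M : Matrix Idx Idx ℂ) (j : Idx) :
    M *ᵥ Pi.single j 1 = fun i => M i j := by
  ext i; simp [Matrix.mulVec, dotProduct, Pi.single_apply]

lemma gam_col (S0 : Idx) (m : Fin 4) (h1 : m ∈ S0) (h2 : ∀ b ∈ S0, m ≤ b) :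
    gam m *ᵥ Pi.single (S0.erase m) 1 = Pi.single S0 1 := by
  rw [mulVec_single']
  ext S
  rw [gam_cast, castM_apply, colZ S0 m h1 h2 S, Pi.single_apply]
  split <;> norm_num

/-- Each single-index theta matrix (the unique operator commuting with all
`γ`'s and sending `e_∅` to `e_α`) is similar to the corresponding gamma matrix:
`Θ_α = S γ_α S⁻¹`. -/
theorem theta_similar_gamma (α : Fin 4) (Θ : Matrix Idx Idx ℂ)
    (hcomm : ∀ ρ, Θ * gam ρ = gam ρ * Θ)
    (h0 : Θ *ᵥ Pi.single (∅ : Idx) (1 : ℂ) = Pi.single ({α} : Idx) (1 : ℂ)) :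
    Θ = Smat * gam α * Smat⁻¹ := by
  have hM : Smat * gam α * Smat⁻¹ = castM (ThZ α) := by
    rw [Smat_inv, ThZ_eq, Smat_cast, gam_cast, castM_mul, castM_mul]
  have hMcomm : ∀ ρ, castM (ThZ α) * gam ρ = gam ρ * castM (ThZ α) := by
    intro ρ
    rw [gam_cast ρ, ← castM_mul, ← castM_mul, commZ]
  have hM0 : castM (ThZ α) *ᵥ Pi.single (∅ : Idx) (1 : ℂ) = Pi.single ({α} : Idx) (1 : ℂ) := by
    rw [mulVec_single']
    ext S
    rw [castM_apply, ThZ_col α S, Pi.single_apply]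
    split <;> norm_num
  rw [hM]
  have key : ∀ S0 : Idx, Θ *ᵥ Pi.single S0 1 = castM (ThZ α) *ᵥ Pi.single S0 1 := by
    intro S0
    induction S0 using Finset.strongInduction with
    | _ S0 ih =>
      rcases eq_or_ne S0 ∅ with h | h
      · subst h; rw [h0, hM0]
      · have hne : S0.Nonempty := Finset.nonempty_iff_ne_empty.mpr h
        set m := S0.min' hne with hm
        have h1 : m ∈ S0 := S0.min'_mem hne
        have h2 : ∀ b ∈ S0, m ≤ b := fun b hb => S0.min'_le b hb
        have hcol := gam_col S0 m h1 h2
        have hsub : S0.erase m ⊂ S0 := Finset.erase_ssubset h1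
        calc Θ *ᵥ Pi.single S0 1
            = Θ *ᵥ (gam m *ᵥ Pi.single (S0.erase m) 1) := by rw [hcol]
          _ = (Θ * gam m) *ᵥ Pi.single (S0.erase m) 1 := Matrix.mulVec_mulVec _ _ _
          _ = (gam m * Θ) *ᵥ Pi.single (S0.erase m) 1 := by rw [hcomm]
          _ = gam m *ᵥ (Θ *ᵥ Pi.single (S0.erase m) 1) := (Matrix.mulVec_mulVec _ _ _).symm
          _ = gam m *ᵥ (castM (ThZ α) *ᵥ Pi.single (S0.erase m) 1) := by rw [ih _ hsub]
          _ = (gam m * castM (ThZ α)) *ᵥ Pi.single (S0.erase m) 1 := Matrix.mulVec_mulVec _ _ _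
          _ = (castM (ThZ α) * gam m) *ᵥ Pi.single (S0.erase m) 1 := by rw [hMcomm]
          _ = castM (ThZ α) *ᵥ (gam m *ᵥ Pi.single (S0.erase m) 1) := (Matrix.mulVec_mulVec _ _ _).symm
          _ = castM (ThZ α) *ᵥ Pi.single S0 1 := by rw [hcol]
  ext S T
  have := congrFun (key T) S
  rwa [mulVec_single', mulVec_single'] at this
end

section
/- Let χ_0^+(p) := (1/(√2 m))(m e_∅ - i p^α e_α) in the complexified exterior algebra of Minkowski space, with p^α p_α = m². Then p^α Θ_α χ_0^+(p) = i m χ_0^+(p), where Θ_α are the single-index theta matrices. -/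
open Matrix

/-- The spinor `χ_0^+(p) = (1/(√2 m))(m e_∅ - i p^α e_α)`. -/
noncomputable def chi0 (m : ℝ) (p : Fin 4 → ℝ) : Idx → ℂ :=
  ((Real.sqrt 2 * m : ℝ) : ℂ)⁻¹ •
    ((m : ℂ) • (Pi.single (∅ : Idx) (1 : ℂ) : Idx → ℂ) -
      Complex.I • ∑ α, (p α : ℂ) • (Pi.single ({α} : Idx) (1 : ℂ) : Idx → ℂ))

/-!
Since `Θ_α` commutes with `γ_β` and `Θ_α e_∅ = e_α`, we get
`Θ_α e_β = Θ_α γ_β e_∅ = γ_β e_α`. Hence `p^α Θ_α χ_0^+(p)` is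
`(√2 m)⁻¹ (m p^α e_α - i p^α p^β γ_β e_α)`, and since `γ_β e_α = e_β ∧ e_α - η_{αβ} e_∅` with the
wedge part antisymmetric in `α, β`, the double sum is `-p^α p_α e_∅ = -m² e_∅`.
Comparing coefficients with `i m χ_0^+(p)` uses only `i² = -1`.
-/

lemma neg_one_pow_eq_neg_of_add_eq_one {R : Type*} [Ring R] {a b : ℕ} (h : a + b = 1) :
    (-1 : R) ^ a = -(-1) ^ b := by
  obtain ⟨rfl, rfl⟩ | ⟨rfl, rfl⟩ : (a = 0 ∧ b = 1) ∨ (a = 1 ∧ b = 0) := by omega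
  all_goals simp

lemma wedgeE_mulVec_single_singleton (α β : Fin 4) :
    wedgeE β *ᵥ Pi.single ({α} : Idx) 1 = -(wedgeE α *ᵥ Pi.single ({β} : Idx) 1) := by
  have swap : ∀ (α β : Fin 4) (S : Idx), β ∈ S ∧ {α} = S.erase β →
      (α ∈ S ∧ {β} = S.erase α) ∧ (S.filter (· < β)).card + (S.filter (· < α)).card = 1 := by
    decide
  ext S
  simp only [mulVec_single_one, Pi.neg_apply, col_apply, wedgeE, of_apply]
  split_ifs with h h' h'
  · exact neg_one_pow_eq_neg_of_add_eq_one (swap α β S h).2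
  · exact absurd (swap α β S h).1 h'
  · exact absurd (swap β α S h').1 h
  · simp

lemma iotaE_mulVec_single_singleton (α β : Fin 4) :
    iotaE β *ᵥ Pi.single ({α} : Idx) 1 = if β = α then etaC α • Pi.single ∅ 1 else 0 := by
  ext S
  have hcond : (β ∉ S ∧ {α} = insert β S) ↔ (β = α ∧ S = ∅) := by decide +revert
  simp only [mulVec_single_one, col_apply, iotaE, of_apply, hcond]
  rcases eq_or_ne β α with rfl | hne
  · by_cases hS : S = ∅ <;> simp [hS]
  · simp [hne]

lemma wedgeE_mulVec_single_empty (β : Fin 4) :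
    wedgeE β *ᵥ Pi.single (∅ : Idx) 1 = Pi.single {β} 1 := by
  ext S
  have hS : (β ∈ S ∧ ∅ = S.erase β) ↔ S = {β} := by decide +revert
  by_cases h : S = {β}
  · simp [wedgeE, h, Finset.filter_singleton]
  · simp [wedgeE, hS, h]

lemma iotaE_mulVec_single_empty (β : Fin 4) :
    iotaE β *ᵥ Pi.single (∅ : Idx) 1 = 0 := by
  ext S
  simp [iotaE, eq_comm (a := ∅)]

lemma gam_mulVec_single_empty (β : Fin 4) :
    gam β *ᵥ Pi.single (∅ : Idx) 1 = Pi.single {β} 1 := by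
  rw [gam, sub_mulVec, wedgeE_mulVec_single_empty, iotaE_mulVec_single_empty, sub_zero]

lemma sum_sum_smul_gam_mulVec_single_singleton (q : Fin 4 → ℂ) :
    ∑ α, ∑ β, (q α * q β) • (gam β *ᵥ Pi.single ({α} : Idx) 1)
      = -(∑ α, etaC α * q α ^ 2) • Pi.single (∅ : Idx) 1 := by
  have hwedge : ∑ α, ∑ β, (q α * q β) • (wedgeE β *ᵥ Pi.single ({α} : Idx) 1) = 0 := by
    refine self_eq_neg.mp ?_
    calc _ = ∑ α, ∑ β, (q β * q α) • (wedgeE α *ᵥ Pi.single ({β} : Idx) 1) := Finset.sum_comm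
      _ = _ := by
        simp only [← Finset.sum_neg_distrib]
        refine Finset.sum_congr rfl fun α _ => Finset.sum_congr rfl fun β _ => ?_
        rw [wedgeE_mulVec_single_singleton β α, mul_comm, smul_neg]
  have hiota : ∑ α, ∑ β, (q α * q β) • (iotaE β *ᵥ Pi.single ({α} : Idx) 1)
      = (∑ α, etaC α * q α ^ 2) • Pi.single (∅ : Idx) 1 := by
    simp only [iotaE_mulVec_single_singleton, smul_ite, smul_zero, Finset.sum_ite_eq',
      Finset.mem_univ, if_true, smul_smul, Finset.sum_smul]
    congr! 2 with α
    ring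
  simp only [gam, sub_mulVec, smul_sub, Finset.sum_sub_distrib, hwedge, hiota, zero_sub, neg_smul]

lemma mulVec_single_singleton_of_commute {T : Matrix Idx Idx ℂ} {β : Fin 4}
    (h : T * gam β = gam β * T) :
    T *ᵥ Pi.single ({β} : Idx) 1 = gam β *ᵥ (T *ᵥ Pi.single ∅ 1) := by
  rw [← gam_mulVec_single_empty β, mulVec_mulVec, h, ← mulVec_mulVec]

theorem theta_p_chi0_general (m : ℝ) (p : Fin 4 → ℝ)
    (hp : ∑ α, etaR α * p α * p α = m ^ 2)
    (Th : Fin 4 → Matrix Idx Idx ℂ)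
    (hcomm : ∀ α ρ, Th α * gam ρ = gam ρ * Th α)
    (h0 : ∀ α, Th α *ᵥ Pi.single (∅ : Idx) (1 : ℂ) = Pi.single ({α} : Idx) (1 : ℂ)) :
    ∑ α, (p α : ℂ) • (Th α *ᵥ chi0 m p) = (Complex.I * (m : ℂ)) • chi0 m p := by
  have hTh (α β : Fin 4) : Th α *ᵥ Pi.single ({β} : Idx) 1 = gam β *ᵥ Pi.single {α} 1 := by
    rw [mulVec_single_singleton_of_commute (hcomm α β), h0]
  have hmass : ∑ α, etaC α * (p α : ℂ) ^ 2 = (m : ℂ) ^ 2 := by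
    simp only [etaC]; exact_mod_cast (by simpa only [mul_assoc, sq] using hp)
  have hpp : ∑ α, ∑ β, ((p α : ℂ) * p β) • (gam β *ᵥ Pi.single ({α} : Idx) 1)
      = -(m : ℂ) ^ 2 • Pi.single (∅ : Idx) 1 := by
    rw [← hmass]
    exact sum_sum_smul_gam_mulVec_single_singleton _
  calc ∑ α, (p α : ℂ) • (Th α *ᵥ chi0 m p)
      = ((√2 * m : ℝ) : ℂ)⁻¹ • ((m : ℂ) • ∑ α, (p α : ℂ) • Pi.single ({α} : Idx) 1
          - Complex.I • ∑ α, ∑ β, ((p α : ℂ) * p β) • (gam β *ᵥ Pi.single ({α} : Idx) 1)) := by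
        simp only [chi0, mulVec_smul, mulVec_sub, mulVec_sum, h0, hTh, smul_sub, Finset.smul_sum,
          Finset.sum_sub_distrib, smul_smul]
        congr 1 <;> refine Finset.sum_congr rfl fun α _ => ?_
        · module
        · refine Finset.sum_congr rfl fun β _ => ?_
          module
    _ = (Complex.I * m) • chi0 m p := by
        rw [hpp, chi0]
        match_scalars
        · linear_combination ((m : ℂ) * ((√2 : ℝ) : ℂ)⁻¹ * (m : ℂ)⁻¹) * Complex.I_sq
        · ring

/-- If `p^α p_α = m²`, then `p^α Θ_α χ_0^+(p) = i m χ_0^+(p)`, where the `Θ_α`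
are the single-index theta matrices (the operators commuting with all `γ`'s
and sending `e_∅` to `e_α`). -/
theorem theta_p_chi0 (m : ℝ) (hm : 0 < m) (p : Fin 4 → ℝ)
    (hp : ∑ α, etaR α * p α * p α = m ^ 2)
    (Th : Fin 4 → Matrix Idx Idx ℂ)
    (hcomm : ∀ α ρ, Th α * gam ρ = gam ρ * Th α)
    (h0 : ∀ α, Th α *ᵥ Pi.single (∅ : Idx) (1 : ℂ) = Pi.single ({α} : Idx) (1 : ℂ)) :
    ∑ α, (p α : ℂ) • (Th α *ᵥ chi0 m p) = (Complex.I * (m : ℂ)) • chi0 m p :=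
  theta_p_chi0_general m p hp Th hcomm h0
end
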